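/- arXiv:2106.03554 — 2 statements merged into one kernel-verified Lean document; each statement's English description precedes it below -/
import Mathlib

section
/- In a free-choice net, expediting transitions is safe: if (N,M)[σ⟩(N,M') and σ' is obtained from σ by repeatedly moving some transition t_j from position j to an earlier position i, provided that (a) the prefix of length i-1 followed by t_j is enabled from M, and (b) no transition at positions i,...,j-1 belongs to the same cluster as t_j, then σ' is also enabled at M and leads to the same marking M'. -/
open scoped Classical

/-- A Petri net over places `P` and transitions `T`, given by preset and postset
of each transition (this encodes the flow relation `F`). -/
structure PetriNet (P T : Type) where
  pre : T → Finset P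
  post : T → Finset P

namespace PetriNet

variable {P T : Type} [DecidableEq P] (N : PetriNet P T)

/-- A transition is enabled if each input place holds at least one token. -/
def enabled (M : P → ℕ) (t : T) : Prop := ∀ p ∈ N.pre t, 1 ≤ M p

/-- Firing a transition. -/
def fire (M : P → ℕ) (t : T) : P → ℕ :=
  fun p => M p - (if p ∈ N.pre t then 1 else 0) + (if p ∈ N.post t then 1 else 0)

/-- `Fires M σ M'` : the firing sequence σ is enabled in M and leads to M'. -/
inductive Fires : (P → ℕ) → List T → (P → ℕ) → Prop
  | nil (M : P → ℕ) : Fires M [] M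
  | cons {M : P → ℕ} {t : T} {σ : List T} {M'' : P → ℕ} :
      N.enabled M t → Fires (N.fire M t) σ M'' → Fires M (t :: σ) M''

/-- Reachability of markings. -/
def Reach (M M' : P → ℕ) : Prop := ∃ σ : List T, N.Fires M σ M'

/-- The set of transitions enabled in a marking. -/
def en (M : P → ℕ) : Set T := {t | N.enabled M t}

/-- Lucency: reachable markings are determined by their sets of enabled transitions. -/
def Lucent (M : P → ℕ) : Prop :=
  ∀ M1 M2 : P → ℕ, N.Reach M M1 → N.Reach M M2 → N.en M1 = N.en M2 → M1 = M2

/-- Free-choice: presets of any two transitions are equal or disjoint. -/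
def FreeChoice : Prop :=
  ∀ t1 t2 : T, N.pre t1 = N.pre t2 ∨ N.pre t1 ∩ N.pre t2 = ∅

/-- Proper: every transition has a nonempty preset and postset. -/
def Proper : Prop := ∀ t : T, (N.pre t).Nonempty ∧ (N.post t).Nonempty

/-- The directed edge (flow) relation on nodes `P ⊕ T`. -/
def edge : (P ⊕ T) → (P ⊕ T) → Prop
  | Sum.inl p, Sum.inr t => p ∈ N.pre t
  | Sum.inr t, Sum.inl p => p ∈ N.post t
  | _, _ => False

/-- `InCluster x y` : y is in the cluster of x (smallest set containing x closed
under adding output transitions of places and input places of transitions). -/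
inductive InCluster : (P ⊕ T) → (P ⊕ T) → Prop
  | refl (x : P ⊕ T) : InCluster x x
  | toTrans {x : P ⊕ T} {p : P} {t : T} :
      InCluster x (Sum.inl p) → p ∈ N.pre t → InCluster x (Sum.inr t)
  | toPlace {x : P ⊕ T} {t : T} {p : P} :
      InCluster x (Sum.inr t) → p ∈ N.pre t → InCluster x (Sum.inl p)

/-- The cluster of a node. -/
def cluster (x : P ⊕ T) : Set (P ⊕ T) := {y | N.InCluster x y}

/-- A set of nodes is a cluster if it is the cluster of some node. -/
def IsCluster (C : Set (P ⊕ T)) : Prop := ∃ x : P ⊕ T, C = N.cluster x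

/-- `Mrk(C)` : one token on each place of `C`, no tokens elsewhere. -/
noncomputable def clusterMrk (C : Set (P ⊕ T)) : P → ℕ :=
  fun p => if Sum.inl p ∈ C then 1 else 0

/-- A home marking is reachable from every reachable marking. -/
def IsHomeMarking (M MH : P → ℕ) : Prop := ∀ M', N.Reach M M' → N.Reach M' MH

/-- A home cluster is a cluster whose marking `Mrk(C)` is a home marking. -/
def HomeCluster (M : P → ℕ) (C : Set (P ⊕ T)) : Prop :=
  N.IsCluster C ∧ N.IsHomeMarking M (clusterMrk C)

/-- A conflict-pair for `(N,M)`. -/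
def ConflictPair (M M1 M2 : P → ℕ) : Prop :=
  N.Reach M M1 ∧ N.Reach M M2 ∧
  (∃ t, N.enabled M1 t) ∧ (∃ t, N.enabled M2 t) ∧
  (∀ t, ¬ (N.enabled M1 t ∧ N.enabled M2 t)) ∧
  (∀ t, N.enabled M1 t → ∃ p ∈ N.pre t, 1 ≤ M2 p) ∧
  (∀ t, N.enabled M2 t → ∃ p ∈ N.pre t, 1 ≤ M1 p)

/-- A disentangled path `⟨p_1,t_1,p_2,…,t_{n-1},p_n⟩`, given by its lists of
places and transitions: consecutive nodes are connected by the flow relation and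
all places lie in pairwise distinct clusters. -/
def IsDisPath (ps : List P) (ts : List T) : Prop :=
  ps.length = ts.length + 1 ∧
  (∀ (i : ℕ) (t : T) (p p' : P), ts[i]? = some t → ps[i]? = some p →
      ps[i + 1]? = some p' → p ∈ N.pre t ∧ p' ∈ N.post t) ∧
  ps.Pairwise (fun a b => N.cluster (Sum.inl a) ≠ N.cluster (Sum.inl b))

/-- `Exp M σ σ'` : σ' is obtained from σ by repeatedly expediting transitions
(moving the transition at position j to an earlier position i, provided the
prefix of length i followed by that transition is enabled from M and no
transition at positions i..j-1 shares its cluster). -/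
inductive Exp (M : P → ℕ) (σ : List T) : List T → Prop
  | refl : Exp M σ σ
  | step {σ' : List T} {i j : ℕ} (h : Exp M σ σ') (hij : i < j) (hj : j < σ'.length)
      (ha : ∃ Mx, N.Fires M (σ'.take i ++ [σ'.get ⟨j, hj⟩]) Mx)
      (hb : ∀ (k : ℕ) (hk : k < σ'.length), i ≤ k → k < j →
        N.cluster (Sum.inr (σ'.get ⟨k, hk⟩)) ≠ N.cluster (Sum.inr (σ'.get ⟨j, hj⟩))) :
      Exp M σ ((σ'.eraseIdx j).insertIdx i (σ'.get ⟨j, hj⟩))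

/-- Liveness: from every reachable marking, every transition can be enabled again. -/
def Live (M : P → ℕ) : Prop :=
  ∀ M', N.Reach M M' → ∀ t : T, ∃ M'', N.Reach M' M'' ∧ N.enabled M'' t

/-- Boundedness. -/
def Bounded (M : P → ℕ) : Prop :=
  ∃ k, ∀ M', N.Reach M M' → ∀ p, M' p ≤ k

/-- Safety (1-boundedness). -/
def Safe (M : P → ℕ) : Prop := ∀ M', N.Reach M M' → ∀ p, M' p ≤ 1

end PetriNet

/-!
The cluster relation only follows arcs `p ∈ •t`, in either direction, so it is symmetric and
two transitions sharing an input place lie in the same cluster. Hence a transition `t` whose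
cluster differs from those of `u₁, …, uₙ` has a preset disjoint from theirs: firing the `uₖ`
never removes tokens `t` needs and vice versa, so `t` stays enabled and commutes past each
`uₖ` in turn, without changing the reached marking.
-/

namespace List

variable {α : Type*}

theorem insertIdx_eq_take_append_drop (a : α) {l : List α} {n : ℕ} (h : n ≤ l.length) :
    l.insertIdx n a = l.take n ++ a :: l.drop n := by
  induction l generalizing n with
  | nil => simp_all
  | cons x xs ih =>
    cases n with
    | zero => simp
    | succ n => simp [insertIdx_succ_cons, ih (Nat.le_of_succ_le_succ h)]

theorem eq_take_append_drop_take_append_getElem_cons {l : List α} {i j : ℕ} (hij : i ≤ j)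
    (hj : j < l.length) :
    l = l.take i ++ ((l.take j).drop i ++ l[j] :: l.drop (j + 1)) := by
  calc l = l.take j ++ l.drop j := (take_append_drop j l).symm
    _ = (l.take j).take i ++ (l.take j).drop i ++ l[j] :: l.drop (j + 1) := by
      rw [take_append_drop i (l.take j), drop_eq_getElem_cons hj]
    _ = _ := by rw [take_take, Nat.min_eq_left hij, append_assoc]

theorem insertIdx_eraseIdx_getElem_of_le {l : List α} {i j : ℕ} (hij : i ≤ j)
    (hj : j < l.length) :
    (l.eraseIdx j).insertIdx i l[j] = l.take i ++ l[j] :: ((l.take j).drop i ++ l.drop (j + 1)) := by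
  have hi : i ≤ (l.take j).length := by simp; omega
  rw [eraseIdx_eq_take_drop_succ, insertIdx_eq_take_append_drop _ (by simp; omega),
    take_append_of_le_length hi, drop_append_of_le_length hi, take_take, Nat.min_eq_left hij]

theorem exists_getElem_eq_of_mem_drop_take {l : List α} {i j : ℕ} {a : α}
    (h : a ∈ (l.take j).drop i) : ∃ (k : ℕ) (hk : k < l.length), i ≤ k ∧ k < j ∧ l[k] = a := by
  obtain ⟨k, hk, rfl⟩ := mem_iff_getElem.mp h
  simp only [length_drop, length_take] at hk
  exact ⟨i + k, by omega, by omega, by omega, by simp⟩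

end List

namespace PetriNet

section Clusters

variable {P T : Type} {N : PetriNet P T}

theorem InCluster.trans {x y z : P ⊕ T} (hxy : N.InCluster x y) (hyz : N.InCluster y z) :
    N.InCluster x z := by
  induction hyz with
  | refl => exact hxy
  | toTrans _ hp ih => exact ih.toTrans hp
  | toPlace _ hp ih => exact ih.toPlace hp

theorem InCluster.symm {x y : P ⊕ T} (h : N.InCluster x y) : N.InCluster y x := by
  induction h with
  | refl => exact .refl _
  | toTrans _ hp ih => exact ((InCluster.refl _).toPlace hp).trans ih
  | toPlace _ hp ih => exact ((InCluster.refl _).toTrans hp).trans ih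

theorem cluster_eq_of_inCluster {x y : P ⊕ T} (h : N.InCluster x y) :
    N.cluster x = N.cluster y :=
  Set.ext fun _ => ⟨h.symm.trans, h.trans⟩

theorem disjoint_pre_of_cluster_ne {u t : T}
    (h : N.cluster (Sum.inr u) ≠ N.cluster (Sum.inr t)) : Disjoint (N.pre u) (N.pre t) :=
  Finset.disjoint_left.mpr fun _ hu ht =>
    h (cluster_eq_of_inCluster (((InCluster.refl _).toPlace hu).toTrans ht))

end Clusters

variable {P T : Type} [DecidableEq P] {N : PetriNet P T}

theorem Fires.det {M M₁ M₂ : P → ℕ} {σ : List T} (h₁ : N.Fires M σ M₁)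
    (h₂ : N.Fires M σ M₂) : M₁ = M₂ := by
  induction h₁ with
  | nil => cases h₂; rfl
  | cons _ _ ih => cases h₂ with
    | cons _ hf => exact ih hf

theorem fires_append {M M' : P → ℕ} {α β : List T} :
    N.Fires M (α ++ β) M' ↔ ∃ M₁, N.Fires M α M₁ ∧ N.Fires M₁ β M' := by
  induction α generalizing M with
  | nil => exact ⟨fun h => ⟨M, .nil M, h⟩, fun ⟨_, hα, hβ⟩ => by cases hα; exact hβ⟩
  | cons t α ih =>
    constructor
    · rintro (_ | ⟨ht, hf⟩)
      obtain ⟨M₁, hα, hβ⟩ := ih.mp hf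
      exact ⟨M₁, .cons ht hα, hβ⟩
    · rintro ⟨M₁, _ | ⟨ht, hα⟩, hβ⟩
      exact .cons ht (ih.mpr ⟨M₁, hα, hβ⟩)

theorem enabled_fire_of_disjoint {M : P → ℕ} {u t : T} (hd : Disjoint (N.pre u) (N.pre t))
    (ht : N.enabled M t) : N.enabled (N.fire M u) t := by
  intro p hp
  have := ht p hp
  simp only [fire, if_neg (Finset.disjoint_right.mp hd hp)]
  omega

theorem fire_comm_of_disjoint {M : P → ℕ} {u t : T} (hd : Disjoint (N.pre u) (N.pre t))
    (hu : N.enabled M u) (ht : N.enabled M t) :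
    N.fire (N.fire M u) t = N.fire (N.fire M t) u := by
  funext p
  simp only [fire]
  by_cases hpu : p ∈ N.pre u
  · have := hu p hpu
    simp only [if_pos hpu, if_neg (Finset.disjoint_left.mp hd hpu)]
    split_ifs <;> omega
  · by_cases hpt : p ∈ N.pre t
    · have := ht p hpt
      simp only [if_neg hpu, if_pos hpt]
      split_ifs <;> omega
    · simp only [if_neg hpu, if_neg hpt]
      split_ifs <;> omega

theorem Fires.cons_append_of_append_cons {M M' : P → ℕ} {t : T} {β γ : List T}
    (h : N.Fires M (β ++ t :: γ) M') (ht : N.enabled M t)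
    (hd : ∀ u ∈ β, Disjoint (N.pre u) (N.pre t)) : N.Fires M (t :: (β ++ γ)) M' := by
  induction β generalizing M with
  | nil => exact h
  | cons u β ih =>
    obtain _ | ⟨hu, hf⟩ := h
    have hut := hd u (List.mem_cons_self ..)
    obtain _ | ⟨-, hf⟩ :=
      ih hf (enabled_fire_of_disjoint hut ht) fun v hv => hd v (List.mem_cons_of_mem u hv)
    refine .cons ht (.cons (enabled_fire_of_disjoint hut.symm hu) ?_)
    rwa [← fire_comm_of_disjoint hut hu ht]

theorem Fires.expedite {M M' : P → ℕ} {σ : List T} {i j : ℕ} (h : N.Fires M σ M')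
    (hij : i < j) (hj : j < σ.length) (ha : ∃ Mx, N.Fires M (σ.take i ++ [σ[j]]) Mx)
    (hb : ∀ (k : ℕ) (hk : k < σ.length), i ≤ k → k < j → Disjoint (N.pre σ[k]) (N.pre σ[j])) :
    N.Fires M ((σ.eraseIdx j).insertIdx i σ[j]) M' := by
  rw [List.eq_take_append_drop_take_append_getElem_cons hij.le hj] at h
  obtain ⟨M₁, hα, hrest⟩ := fires_append.mp h
  obtain ⟨_, hx⟩ := ha
  obtain ⟨M₁', hα', _ | ⟨ht, -⟩⟩ := fires_append.mp hx
  cases hα.det hα'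
  rw [List.insertIdx_eraseIdx_getElem_of_le hij.le hj]
  refine fires_append.mpr ⟨M₁, hα, hrest.cons_append_of_append_cons ht fun u hu => ?_⟩
  obtain ⟨k, hk, hik, hkj, rfl⟩ := List.exists_getElem_eq_of_mem_drop_take hu
  exact hb k hk hik hkj

end PetriNet

theorem expediting_is_safe_general {P T : Type} [DecidableEq P]
    (N : PetriNet P T) (M M' : P → ℕ) (s s' : List T)
    (h : N.Fires M s M') (he : N.Exp M s s') :
    N.Fires M s' M' := by
  induction he with
  | refl => exact h
  | step _ hij hj ha hb ih =>
    exact ih.expedite hij hj ha fun k hk hik hkj =>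
      PetriNet.disjoint_pre_of_cluster_ne (hb k hk hik hkj)

/-- Expediting transitions is safe in free-choice nets: any
sequence obtained from an enabled firing sequence by repeatedly expediting
transitions is also enabled and leads to the same marking. -/
theorem expediting_is_safe {P T : Type} [DecidableEq P]
    (N : PetriNet P T) (hfc : N.FreeChoice) (M M' : P → ℕ) (s s' : List T)
    (h : N.Fires M s M') (he : N.Exp M s s') :
    N.Fires M s' M' :=
  expediting_is_safe_general N M M' s s' h he
end

section
/- In a marked Petri net (N,M) with a conflict-pair (M1,M2), write M^agree for the greatest lower bound (pointwise minimum) of M1 and M2, and M1 = M^agree + D1, M2 = M^agree + D2. Then the submarkings M^agree, D1, and D2 are all non-empty, no transition is enabled in M^agree, and every transition enabled in M1 (respectively M2) has at least one input place marked in M^agree and at least one input place marked in D1 (respectively D2). -/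
open scoped Classical

/-! A transition enabled in `M1` is not enabled in `M2`, so one of its input places is empty in `M2`
and keeps all its `M1`-tokens in `D1`; the conflict condition supplies another input place marked in
`M2`, hence in `M^agree`. A transition enabled in `M^agree` would be enabled in both `M1` and `M2`. -/

namespace PetriNet

variable {P T : Type} (N : PetriNet P T) {M M1 M2 : P → ℕ} {t : T}

theorem enabled_inf_iff : N.enabled (M1 ⊓ M2) t ↔ N.enabled M1 t ∧ N.enabled M2 t := by
  simp only [enabled, Pi.inf_apply, le_inf_iff, ← forall_and]

theorem exists_mem_pre_one_le_min (h1 : N.enabled M1 t) (h2 : ∃ p ∈ N.pre t, 1 ≤ M2 p) :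
    ∃ p ∈ N.pre t, 1 ≤ min (M1 p) (M2 p) :=
  let ⟨p, hp, hp2⟩ := h2
  ⟨p, hp, le_min (h1 p hp) hp2⟩

theorem exists_mem_pre_one_le_sub_min (h1 : N.enabled M1 t) (h2 : ¬ N.enabled M2 t) :
    ∃ p ∈ N.pre t, 1 ≤ M1 p - min (M1 p) (M2 p) := by
  simp only [enabled, not_forall, not_le, Nat.lt_one_iff] at h2
  obtain ⟨p, hp, hp2⟩ := h2
  exact ⟨p, hp, by simpa [tsub_min, hp2] using h1 p hp⟩

variable {N} [DecidableEq P]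

theorem ConflictPair.symm (h : N.ConflictPair M M1 M2) : N.ConflictPair M M2 M1 :=
  let ⟨r1, r2, e1, e2, hd, h12, h21⟩ := h
  ⟨r2, r1, e2, e1, fun t ht => hd t ht.symm, h21, h12⟩

theorem ConflictPair.exists_agree_and_disagree_of_enabled_left (h : N.ConflictPair M M1 M2)
    (ht : N.enabled M1 t) :
    (∃ p ∈ N.pre t, 1 ≤ min (M1 p) (M2 p)) ∧ (∃ p ∈ N.pre t, 1 ≤ M1 p - min (M1 p) (M2 p)) :=
  let ⟨_, _, _, _, hdisj, h12, _⟩ := h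
  ⟨N.exists_mem_pre_one_le_min ht (h12 t ht),
    N.exists_mem_pre_one_le_sub_min ht fun ht2 => hdisj t ⟨ht, ht2⟩⟩

theorem ConflictPair.exists_agree_and_disagree_of_enabled_right (h : N.ConflictPair M M1 M2)
    (ht : N.enabled M2 t) :
    (∃ p ∈ N.pre t, 1 ≤ min (M1 p) (M2 p)) ∧ (∃ p ∈ N.pre t, 1 ≤ M2 p - min (M1 p) (M2 p)) := by
  simpa only [min_comm (M2 _)] using h.symm.exists_agree_and_disagree_of_enabled_left ht

end PetriNet

/-- Splitting a conflict-pair into agreement and disagreement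
parts: with `M^agree = min(M1,M2)`, `D1 = M1 - M^agree`, `D2 = M2 - M^agree`,
all three submarkings are non-empty, no transition is enabled in `M^agree`, and
every transition enabled in M1 (resp. M2) has an input place marked in
`M^agree` and an input place marked in D1 (resp. D2). -/
theorem conflict_pair_agree_disagree {P T : Type} [DecidableEq P]
    (N : PetriNet P T) (M M1 M2 : P → ℕ) (h : N.ConflictPair M M1 M2) :
    (∃ p, 1 ≤ min (M1 p) (M2 p)) ∧
    (∃ p, 1 ≤ M1 p - min (M1 p) (M2 p)) ∧
    (∃ p, 1 ≤ M2 p - min (M1 p) (M2 p)) ∧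
    (∀ t, ¬ N.enabled (fun p => min (M1 p) (M2 p)) t) ∧
    (∀ t, N.enabled M1 t →
      (∃ p ∈ N.pre t, 1 ≤ min (M1 p) (M2 p)) ∧
      (∃ p ∈ N.pre t, 1 ≤ M1 p - min (M1 p) (M2 p))) ∧
    (∀ t, N.enabled M2 t →
      (∃ p ∈ N.pre t, 1 ≤ min (M1 p) (M2 p)) ∧
      (∃ p ∈ N.pre t, 1 ≤ M2 p - min (M1 p) (M2 p))) := by
  have left := fun t => h.exists_agree_and_disagree_of_enabled_left (t := t)
  have right := fun t => h.exists_agree_and_disagree_of_enabled_right (t := t)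
  obtain ⟨-, -, ⟨t1, ht1⟩, ⟨t2, ht2⟩, hdisj, -, -⟩ := h
  obtain ⟨⟨p, -, hp⟩, ⟨q, -, hq⟩⟩ := left t1 ht1
  obtain ⟨-, ⟨r, -, hr⟩⟩ := right t2 ht2
  exact ⟨⟨p, hp⟩, ⟨q, hq⟩, ⟨r, hr⟩, fun t ht => hdisj t (N.enabled_inf_iff.1 ht), left, right⟩
end
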